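/- arXiv:2210.16974 — 2 statements merged into one kernel-verified Lean document; each statement's English description precedes it below -/
import Mathlib

section
/- Let n ≥ 1, let v_1,…,v_m ∈ Sⁿ⁻¹ be pairwise distinct with positive integer weights μ_1,…,μ_m, and let u_1,…,u_k ∈ Sⁿ⁻¹ be pairwise distinct with k = μ_1 + … + μ_m; set μ = ∑ μ_i δ_{v_i} and λ = ∑ δ_{u_j}. Assume μ and λ are weak Aleksandrov related and μ is not concentrated on a closed hemisphere. If there exist f, g ∈ 𝔽 with f ≠ g such that both f and g maximize the assignment functional A over 𝔽 (i.e. A(f) = A(g) and A(h) ≤ A(f) for all h ∈ 𝔽), then there is no convex body K ∈ 𝒦ⁿ₀ with μ = λ(K,·). -/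
open MeasureTheory Set RealInnerProductSpace
open scoped ENNReal

noncomputable section

abbrev Euc (n : ℕ) := EuclideanSpace ℝ (Fin n)

/-- The unit sphere `S^{n-1}` in `ℝ^n`. -/
def uSphere (n : ℕ) : Set (Euc n) := Metric.sphere 0 1

/-- A convex body containing the origin in its interior (`K ∈ 𝒦ⁿ₀`). -/
def IsConvexBody0 {n : ℕ} (K : Set (Euc n)) : Prop :=
  IsCompact K ∧ Convex ℝ K ∧ (0 : Euc n) ∈ interior K

/-- The radial function `ρ_K(u) = sup {t > 0 : t • u ∈ K}`. -/
def radialFn {n : ℕ} (K : Set (Euc n)) (u : Euc n) : ℝ :=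
  sSup {t : ℝ | 0 < t ∧ t • u ∈ K}

/-- The normal cone of unit outer normals at `x`. -/
def normalCone {n : ℕ} (K : Set (Euc n)) (x : Euc n) : Set (Euc n) :=
  {w ∈ uSphere n | ∀ y ∈ K, ⟪y - x, w⟫ ≤ 0}

/-- The radial Gauss image `α_K(ω)`. -/
def gaussImage {n : ℕ} (K ω : Set (Euc n)) : Set (Euc n) :=
  ⋃ u ∈ ω, normalCone K (radialFn K u • u)

/-- The relation `μ = λ(K, ·)`: `λ(α_K(ω)) = μ(ω)` for every Borel `ω ⊆ S^{n-1}`,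
`λ` being applied as an outer measure. -/
def GaussRel {n : ℕ} (K : Set (Euc n)) (lam mu : Measure (Euc n)) : Prop :=
  ∀ ω : Set (Euc n), ω ⊆ uSphere n → MeasurableSet ω →
    lam (gaussImage K ω) = mu ω

/-- The cone generated by `ω`: `{t • u : t ≥ 0, u ∈ ω}`. -/
def coneOf {n : ℕ} (ω : Set (Euc n)) : Set (Euc n) :=
  {x | ∃ t : ℝ, 0 ≤ t ∧ ∃ u ∈ ω, x = t • u}

/-- `ω ⊆ S^{n-1}` is spherically convex. -/
def SphConvex {n : ℕ} (ω : Set (Euc n)) : Prop :=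
  ω ⊆ uSphere n ∧ (coneOf ω).Nonempty ∧ Convex ℝ (coneOf ω) ∧ coneOf ω ≠ univ

/-- The polar set `ω*`. -/
def polarSet {n : ℕ} (ω : Set (Euc n)) : Set (Euc n) :=
  {w ∈ uSphere n | ∀ u ∈ ω, ⟪u, w⟫ ≤ 0}

/-- The outer parallel set `ω_β`. -/
def outerPar {n : ℕ} (ω : Set (Euc n)) (β : ℝ) : Set (Euc n) :=
  {w ∈ uSphere n | ∃ u ∈ ω, Real.cos β < ⟪u, w⟫}

/-- `μ` and `λ` are weak Aleksandrov related. -/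
def WeakAleks {n : ℕ} (mu lam : Measure (Euc n)) : Prop :=
  mu (uSphere n) = lam (uSphere n) ∧
  ∀ ω : Set (Euc n), IsCompact ω → SphConvex ω →
    mu ω + lam (polarSet ω) ≤ mu (uSphere n)

/-- `log : ℝ → EReal` with `log x = -∞` for `x ≤ 0`. -/
def elog (x : ℝ) : EReal := if x ≤ 0 then ⊥ else ((Real.log x : ℝ) : EReal)

/-- Assignment functions `𝔽`: each fiber `f⁻¹(i)` has cardinality `μ_i`. -/
def IsAssign {k m : ℕ} (μw : Fin m → ℕ) (f : Fin k → Fin m) : Prop :=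
  ∀ i : Fin m, (Finset.univ.filter fun j => f j = i).card = μw i

/-- The assignment functional `A(f) = ∑_j log ⟨u_j, v_{f(j)}⟩`, valued in `EReal`. -/
def assignA {n k m : ℕ} (u : Fin k → Euc n) (v : Fin m → Euc n) (f : Fin k → Fin m) : EReal :=
  ∑ j : Fin k, elog ⟪u j, v (f j)⟫

/-- Interior of `s` relative to the unit sphere. -/
def sphInterior {n : ℕ} (s : Set (Euc n)) : Set (Euc n) :=
  {x ∈ uSphere n | ∃ ε > 0, ∀ y ∈ uSphere n, dist y x < ε → y ∈ s}

/-- `μ = ∑ μ_i δ_{v_i}` is not concentrated on a closed hemisphere. -/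
def NotHemisphere {n m : ℕ} (v : Fin m → Euc n) : Prop :=
  ¬ ∃ w ∈ uSphere n, ∀ i : Fin m, ⟪w, v i⟫ ≤ 0

/-- The discrete measure `∑ μ_i δ_{v_i}` with natural number weights. -/
def discMeasN {n m : ℕ} (μw : Fin m → ℕ) (v : Fin m → Euc n) : Measure (Euc n) :=
  ∑ i : Fin m, (μw i : ℝ≥0∞) • Measure.dirac (v i)

/-- The discrete measure `∑ μ_i δ_{v_i}` with positive real weights. -/
def discMeasR {n m : ℕ} (μw : Fin m → ℝ) (v : Fin m → Euc n) : Measure (Euc n) :=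
  ∑ i : Fin m, ENNReal.ofReal (μw i) • Measure.dirac (v i)

/-- The support function `h_K`. -/
def suppFn {n : ℕ} (K : Set (Euc n)) (w : Euc n) : ℝ :=
  sSup ((fun x => ⟪x, w⟫) '' K)


section AuxStmt1

open Finset in
private lemma ereal_coe_sum' {α : Type*} (s : Finset α) (f : α → ℝ) :
    ((∑ i ∈ s, f i : ℝ) : EReal) = ∑ i ∈ s, (f i : EReal) := by
  induction s using Finset.cons_induction with
  | empty => simp
  | cons a s ha ih => simp [Finset.sum_cons, ← ih, EReal.coe_add]

private lemma ereal_sum_eq_bot' {α : Type*} (s : Finset α) (f : α → EReal) {a : α}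
    (ha : a ∈ s) (h : f a = ⊥) : ∑ i ∈ s, f i = ⊥ := by
  classical
  rw [← Finset.add_sum_erase s f ha, h, EReal.bot_add]

private lemma elog_of_pos {x : ℝ} (hx : 0 < x) : elog x = ((Real.log x : ℝ) : EReal) :=
  if_neg (not_le.mpr hx)

private lemma assign_sum_comp {k m : ℕ} {μw : Fin m → ℕ} {f : Fin k → Fin m}
    (hf : IsAssign μw f) (F : Fin m → ℝ) :
    ∑ j : Fin k, F (f j) = ∑ i : Fin m, (μw i : ℝ) * F i := by
  rw [← Finset.sum_fiberwise Finset.univ f (fun j => F (f j))]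
  refine Finset.sum_congr rfl fun i _ => ?_
  rw [Finset.sum_congr rfl (fun j hj => by rw [(Finset.mem_filter.mp hj).2]),
      Finset.sum_const, hf i, nsmul_eq_mul]

private lemma discMeasN_apply' {n m : ℕ} (μw : Fin m → ℕ) (v : Fin m → Euc n)
    (S : Set (Euc n)) :
    discMeasN μw v S = ∑ i : Fin m, (μw i : ℝ≥0∞) * S.indicator 1 (v i) := by
  unfold discMeasN
  rw [Measure.coe_finset_sum, Finset.sum_apply]
  refine Finset.sum_congr rfl fun i _ => ?_
  rw [Measure.smul_apply, Measure.dirac_apply, smul_eq_mul]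

private lemma lam_count {n k : ℕ} (u : Fin k → Euc n) (S : Set (Euc n))
    [DecidablePred fun j => u j ∈ S] :
    discMeasN (fun _ : Fin k => 1) u S
      = ((Finset.univ.filter fun j => u j ∈ S).card : ℝ≥0∞) := by
  rw [discMeasN_apply']
  simp only [Nat.cast_one, one_mul]
  rw [Finset.card_filter]
  push_cast
  refine Finset.sum_congr rfl fun j _ => ?_
  by_cases h : u j ∈ S <;> simp [Set.indicator_apply, h]

end AuxStmt1

/-- If the assignment functional is maximized at two distinct elements of `𝔽`,
then there is no convex body solving the Discrete Gauss Image problem. -/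
theorem stmt1 (n m k : ℕ) (hn : 1 ≤ n)
    (v : Fin m → Euc n) (u : Fin k → Euc n)
    (hv : ∀ i, v i ∈ uSphere n) (hu : ∀ j, u j ∈ uSphere n)
    (hvinj : Function.Injective v) (huinj : Function.Injective u)
    (μw : Fin m → ℕ) (hμw : ∀ i, 0 < μw i) (hk : k = ∑ i, μw i)
    (hWA : WeakAleks (discMeasN μw v) (discMeasN (fun _ : Fin k => 1) u))
    (hNH : NotHemisphere v)
    (f g : Fin k → Fin m) (hf : IsAssign μw f) (hg : IsAssign μw g) (hfg : f ≠ g)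
    (heq : assignA u v f = assignA u v g)
    (hmax : ∀ h : Fin k → Fin m, IsAssign μw h → assignA u v h ≤ assignA u v f) :
    ¬ ∃ K : Set (Euc n), IsConvexBody0 K ∧
      GaussRel K (discMeasN (fun _ : Fin k => 1) u) (discMeasN μw v) := by
  classical
  rintro ⟨K, ⟨hKc, hKconv, hK0⟩, hGR⟩
  obtain ⟨ε, hε, hball⟩ := Metric.mem_nhds_iff.mp (mem_interior_iff_mem_nhds.mp hK0)
  have hKball := hball
  have hv1 : ∀ i, ‖v i‖ = 1 := fun i => mem_sphere_zero_iff_norm.mp (hv i)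
  have hu1 : ∀ j, ‖u j‖ = 1 := fun j => mem_sphere_zero_iff_norm.mp (hu j)
  -- small multiples of unit vectors lie in K
  have hhalf : ∀ w : Euc n, ‖w‖ = 1 → (ε/2) • w ∈ K := by
    intro w hw
    apply hball
    rw [Metric.mem_ball, dist_zero_right, norm_smul, hw, mul_one, Real.norm_eq_abs,
      abs_of_pos (half_pos hε)]
    exact half_lt_self hε
  -- radial function facts
  have hrad : ∀ w : Euc n, ‖w‖ = 1 → 0 < radialFn K w ∧ radialFn K w • w ∈ K := by
    intro w hw
    set S : Set ℝ := {t : ℝ | 0 < t ∧ t • w ∈ K} with hSdef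
    have hne : S.Nonempty := ⟨ε/2, half_pos hε, hhalf w hw⟩
    obtain ⟨R, hR⟩ := hKc.isBounded.subset_closedBall 0
    have hbdd : BddAbove S := by
      refine ⟨R, fun t ht => ?_⟩
      have h1 : t • w ∈ Metric.closedBall (0 : Euc n) R := hR ht.2
      rw [Metric.mem_closedBall, dist_zero_right, norm_smul, hw, mul_one,
        Real.norm_eq_abs] at h1
      exact (le_abs_self t).trans h1
    have hpos : 0 < radialFn K w :=
      lt_of_lt_of_le (half_pos hε) (le_csSup hbdd ⟨half_pos hε, hhalf w hw⟩)
    have hclosed : IsClosed {t : ℝ | t • w ∈ K} :=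
      hKc.isClosed.preimage (continuous_id.smul continuous_const)
    have hmem : radialFn K w ∈ {t : ℝ | t • w ∈ K} := by
      have h1 : sSup S ∈ closure S := csSup_mem_closure hne hbdd
      have h2 : closure S ⊆ {t : ℝ | t • w ∈ K} :=
        closure_minimal (fun t ht => ht.2) hclosed
      exact h2 h1
    exact ⟨hpos, hmem⟩
  -- support function facts
  have hbddA : ∀ w : Euc n, BddAbove ((fun x => ⟪x, w⟫) '' K) := fun w =>
    (hKc.image (continuous_id.inner continuous_const)).bddAbove
  have hsupp_le : ∀ w : Euc n, ∀ x ∈ K, ⟪x, w⟫ ≤ suppFn K w := fun w x hx =>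
    le_csSup (hbddA w) ⟨x, hx, rfl⟩
  have hsupp_pos : ∀ w : Euc n, ‖w‖ = 1 → 0 < suppFn K w := by
    intro w hw
    have h1 : ⟪(ε/2) • w, w⟫ = ε/2 := by
      rw [real_inner_smul_left, real_inner_self_eq_norm_sq, hw]; ring
    have := hsupp_le w _ (hhalf w hw)
    rw [h1] at this
    linarith [half_pos hε]
  set ρ : Fin m → ℝ := fun i => radialFn K (v i) with hρdef
  have hρpos : ∀ i, 0 < ρ i := fun i => (hrad (v i) (hv1 i)).1
  have hρmem : ∀ i, ρ i • v i ∈ K := fun i => (hrad (v i) (hv1 i)).2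
  set hh : Fin k → ℝ := fun j => suppFn K (u j) with hhdef
  have hhpos : ∀ j, 0 < hh j := fun j => hsupp_pos (u j) (hu1 j)
  set N : Fin m → Set (Euc n) := fun i => normalCone K (ρ i • v i) with hNdef
  -- membership characterization
  have hkey : ∀ j i, ρ i * ⟪v i, u j⟫ ≤ hh j := by
    intro j i
    have := hsupp_le (u j) _ (hρmem i)
    rwa [real_inner_smul_left] at this
  have hmemN : ∀ j i, u j ∈ N i ↔ ρ i * ⟪v i, u j⟫ = hh j := by
    intro j i
    constructor
    · rintro ⟨-, hle⟩
      have h2 : hh j ≤ ρ i * ⟪v i, u j⟫ := by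
        refine csSup_le (Set.Nonempty.image _ ⟨0, interior_subset hK0⟩) ?_
        rintro t ⟨y, hy, rfl⟩
        have := hle y hy
        rw [inner_sub_left, real_inner_smul_left] at this
        linarith
      exact le_antisymm (hkey j i) h2
    · intro hEq
      refine ⟨hu j, fun y hy => ?_⟩
      rw [inner_sub_left, real_inner_smul_left]
      have h5 := hsupp_le (u j) y hy
      have h6 : suppFn K (u j) = hh j := rfl
      linarith
  -- counting
  have hcnt : ∀ i, ((Finset.univ.filter fun j => u j ∈ N i).card : ℕ) = μw i := by
    intro i
    have hω : ({v i} : Set (Euc n)) ⊆ uSphere n := Set.singleton_subset_iff.mpr (hv i)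
    have hG := hGR {v i} hω (measurableSet_singleton _)
    rw [lam_count] at hG
    have hg : gaussImage K {v i} = N i := by
      simp [gaussImage, hNdef, hρdef]
    rw [hg] at hG
    have hmu : discMeasN μw v {v i} = (μw i : ℝ≥0∞) := by
      rw [discMeasN_apply']
      rw [Finset.sum_eq_single i]
      · simp [Set.indicator_apply]
      · intro i' _ hne
        simp [Set.indicator_apply, Set.mem_singleton_iff, hvinj.ne hne]
      · simp
    rw [hmu] at hG
    exact_mod_cast hG
  have hcover : ∀ j, ∃ i, u j ∈ N i := by
    have hω : Set.range v ⊆ uSphere n := Set.range_subset_iff.mpr hv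
    have hG := hGR (Set.range v) hω (Set.finite_range v).measurableSet
    rw [lam_count] at hG
    have hg : gaussImage K (Set.range v) = ⋃ i, N i := by
      simp [gaussImage, hNdef, hρdef]
    rw [hg] at hG
    have hmu : discMeasN μw v (Set.range v) = (k : ℝ≥0∞) := by
      rw [discMeasN_apply']
      have : ∀ i, (μw i : ℝ≥0∞) * (Set.range v).indicator 1 (v i) = (μw i : ℝ≥0∞) := by
        intro i; simp [Set.indicator_apply, Set.mem_range_self]
      rw [Finset.sum_congr rfl (fun i _ => this i)]
      rw [hk]; push_cast; rfl
    rw [hmu] at hG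
    have hcard : (Finset.univ.filter fun j => u j ∈ ⋃ i, N i).card = k := by
      exact_mod_cast hG
    have huniv : (Finset.univ.filter fun j => u j ∈ ⋃ i, N i) = Finset.univ := by
      apply Finset.eq_univ_of_card
      rw [hcard, Fintype.card_fin]
    intro j
    have : j ∈ Finset.univ.filter fun j => u j ∈ ⋃ i, N i := by
      rw [huniv]; exact Finset.mem_univ j
    exact Set.mem_iUnion.mp (Finset.mem_filter.mp this).2
  have hdisj : ∀ i0 i1, i0 ≠ i1 → ∀ j, u j ∈ N i0 → u j ∈ N i1 → False := by
    intro i0 i1 hne j hj0 hj1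
    have hω : ({v i0, v i1} : Set (Euc n)) ⊆ uSphere n := by
      rw [Set.insert_subset_iff, Set.singleton_subset_iff]; exact ⟨hv i0, hv i1⟩
    have hG := hGR {v i0, v i1} hω
      ((measurableSet_singleton _).insert _)
    rw [lam_count] at hG
    have hg : gaussImage K {v i0, v i1} = N i0 ∪ N i1 := by
      simp [gaussImage, hNdef, hρdef]
    rw [hg] at hG
    have hmu : discMeasN μw v {v i0, v i1} = (μw i0 : ℝ≥0∞) + μw i1 := by
      rw [discMeasN_apply']
      have hstep : ∀ i, (μw i : ℝ≥0∞) * ({v i0, v i1} : Set (Euc n)).indicator 1 (v i)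
          = if i ∈ ({i0, i1} : Finset (Fin m)) then (μw i : ℝ≥0∞) else 0 := by
        intro i
        by_cases h : i = i0 ∨ i = i1
        · rcases h with h | h <;> subst h <;>
            simp [Set.indicator_apply, Set.mem_insert_iff]
        · push_neg at h
          simp [Set.indicator_apply, Set.mem_insert_iff, Set.mem_singleton_iff,
            hvinj.ne h.1, hvinj.ne h.2, h.1, h.2]
      rw [Finset.sum_congr rfl (fun i _ => hstep i), Finset.sum_ite_mem,
        Finset.univ_inter, Finset.sum_pair hne]
    rw [hmu] at hG
    have hcard : (Finset.univ.filter fun j => u j ∈ N i0 ∪ N i1).card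
        = μw i0 + μw i1 := by
      have h1 : ((Finset.univ.filter fun j => u j ∈ N i0 ∪ N i1).card : ℝ≥0∞)
          = ((μw i0 + μw i1 : ℕ) : ℝ≥0∞) := by
        push_cast
        convert hG using 3
        ext x
        simp
      exact_mod_cast h1
    have hfil : (Finset.univ.filter fun j => u j ∈ N i0 ∪ N i1)
        = (Finset.univ.filter fun j => u j ∈ N i0)
          ∪ (Finset.univ.filter fun j => u j ∈ N i1) := by
      ext j'
      simp only [Set.mem_union, Finset.mem_filter, Finset.mem_union, Finset.mem_univ,
        true_and]
    have h2 := Finset.card_union_add_card_inter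
      (Finset.univ.filter fun j => u j ∈ N i0)
      (Finset.univ.filter fun j => u j ∈ N i1)
    rw [← hfil, hcard, hcnt i0, hcnt i1] at h2
    have hinter : ((Finset.univ.filter fun j => u j ∈ N i0)
        ∩ (Finset.univ.filter fun j => u j ∈ N i1)).card = 0 := by omega
    rw [Finset.card_eq_zero] at hinter
    have : j ∈ (Finset.univ.filter fun j => u j ∈ N i0)
        ∩ (Finset.univ.filter fun j => u j ∈ N i1) := by
      simp [Finset.mem_inter, Finset.mem_filter, hj0, hj1]
    rw [hinter] at this
    exact absurd this (Finset.notMem_empty j)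
  choose fK hfK using hcover
  have huniqN : ∀ j i, u j ∈ N i → fK j = i := by
    intro j i h
    by_contra hne
    exact hdisj (fK j) i hne j (hfK j) h
  have hfKassign : IsAssign μw fK := by
    intro i
    rw [← hcnt i]
    congr 1
    ext j
    simp only [Finset.mem_filter, Finset.mem_univ, true_and]
    exact ⟨fun h => h ▸ hfK j, fun h => huniqN j i h⟩
  -- analytic part
  have hinner_fK : ∀ j, ⟪u j, v (fK j)⟫ = hh j / ρ (fK j) := by
    intro j
    have h1 := (hmemN j (fK j)).mp (hfK j)
    have h2 : ρ (fK j) ≠ 0 := ne_of_gt (hρpos _)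
    rw [real_inner_comm, eq_div_iff h2]
    linear_combination h1
  have hpos_fK : ∀ j, 0 < ⟪u j, v (fK j)⟫ := fun j => by
    rw [hinner_fK j]; exact div_pos (hhpos j) (hρpos _)
  set M : ℝ := ∑ j, Real.log (hh j) - ∑ i, (μw i : ℝ) * Real.log (ρ i) with hMdef
  -- value of A at fK
  have hsum_fK : ∑ j, Real.log ⟪u j, v (fK j)⟫ = M := by
    have h1 : ∀ j, Real.log ⟪u j, v (fK j)⟫
        = Real.log (hh j) - Real.log (ρ (fK j)) := by
      intro j
      rw [hinner_fK j, Real.log_div (ne_of_gt (hhpos j)) (ne_of_gt (hρpos _))]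
    rw [Finset.sum_congr rfl (fun j _ => h1 j), Finset.sum_sub_distrib,
      assign_sum_comp hfKassign (fun i => Real.log (ρ i))]
  have hAfK : assignA u v fK = ((M : ℝ) : EReal) := by
    unfold assignA
    rw [← hsum_fK, ereal_coe_sum']
    exact Finset.sum_congr rfl fun j _ => elog_of_pos (hpos_fK j)
  -- the two maximizers
  have hkey2 : ∀ f' : Fin k → Fin m, IsAssign μw f' →
      ((M : ℝ) : EReal) ≤ assignA u v f' → f' = fK := by
    intro f' hassign hle
    have hposf : ∀ j, 0 < ⟪u j, v (f' j)⟫ := by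
      intro j
      by_contra hnp
      push_neg at hnp
      have hbot : assignA u v f' = ⊥ :=
        ereal_sum_eq_bot' _ _ (Finset.mem_univ j) (if_pos hnp)
      rw [hbot] at hle
      exact absurd hle (not_le.mpr (EReal.bot_lt_coe M))
    have hAf : assignA u v f' = ((∑ j, Real.log ⟪u j, v (f' j)⟫ : ℝ) : EReal) := by
      unfold assignA
      rw [ereal_coe_sum']
      exact Finset.sum_congr rfl fun j _ => elog_of_pos (hposf j)
    rw [hAf, EReal.coe_le_coe_iff] at hle
    have htermle : ∀ j, Real.log ⟪u j, v (f' j)⟫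
        ≤ Real.log (hh j) - Real.log (ρ (f' j)) := by
      intro j
      rw [← Real.log_div (ne_of_gt (hhpos j)) (ne_of_gt (hρpos _))]
      apply Real.log_le_log (hposf j)
      rw [le_div_iff₀ (hρpos (f' j))]
      calc ⟪u j, v (f' j)⟫ * ρ (f' j) = ρ (f' j) * ⟪v (f' j), u j⟫ := by
            rw [real_inner_comm]; ring
        _ ≤ hh j := hkey j (f' j)
    have hsumub : ∑ j, (Real.log (hh j) - Real.log (ρ (f' j))) = M := by
      rw [Finset.sum_sub_distrib, assign_sum_comp hassign (fun i => Real.log (ρ i))]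
    have hsumle : ∑ j, Real.log ⟪u j, v (f' j)⟫
        ≤ ∑ j, (Real.log (hh j) - Real.log (ρ (f' j))) :=
      Finset.sum_le_sum fun j _ => htermle j
    have heqsum : ∑ j, Real.log ⟪u j, v (f' j)⟫
        = ∑ j, (Real.log (hh j) - Real.log (ρ (f' j))) := by
      rw [hsumub]; exact le_antisymm (hsumub ▸ hsumle) hle
    have hterm := (Finset.sum_eq_sum_iff_of_le (fun j _ => htermle j)).mp heqsum
    funext j
    have h1 := hterm j (Finset.mem_univ j)
    rw [← Real.log_div (ne_of_gt (hhpos j)) (ne_of_gt (hρpos _))] at h1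
    have h2 : ⟪u j, v (f' j)⟫ = hh j / ρ (f' j) := by
      have := congrArg Real.exp h1
      rwa [Real.exp_log (hposf j), Real.exp_log (div_pos (hhpos j) (hρpos _))] at this
    have h3 : ρ (f' j) * ⟪v (f' j), u j⟫ = hh j := by
      rw [real_inner_comm, h2, mul_comm, div_mul_cancel₀ _ (ne_of_gt (hρpos _))]
    exact (huniqN j (f' j) ((hmemN j (f' j)).mpr h3)).symm
  have hf' : f = fK := hkey2 f hf (hAfK ▸ hmax fK hfKassign)
  have hg' : g = fK := hkey2 g hg (by rw [← heq]; exact hAfK ▸ hmax fK hfKassign)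
  exact hfg (hf'.trans hg'.symm)
end
end

section
/- Let n ≥ 1, let μ = ∑_{i=1}^m μ_i δ_{v_i} and λ = ∑_{j=1}^k λ_j δ_{u_j} be discrete measures on Sⁿ⁻¹ (pairwise distinct v_i, pairwise distinct u_j, positive weights), assume μ is not concentrated on a closed hemisphere, and suppose K ∈ 𝒦ⁿ₀ satisfies μ = λ(K,·). Let P = conv{ρ_K(v_1)•v_1, …, ρ_K(v_m)•v_m}. Then 0 lies in the interior of P (so P ∈ 𝒦ⁿ₀), μ = λ(P,·), and there exists a function f : {1,…,k} → {1,…,m} such that for every j the vector u_j lies in the interior, relative to Sⁿ⁻¹, of the normal cone N(P, ρ_K(v_{f(j)})•v_{f(j)}). -/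
open MeasureTheory Set RealInnerProductSpace
open scoped ENNReal

noncomputable section

-- Auxiliary lemmas

lemma mem_uSphere_iff {n : ℕ} {x : Euc n} : x ∈ uSphere n ↔ ‖x‖ = 1 := by
  rw [uSphere, mem_sphere_zero_iff_norm]

lemma discMeasR_apply' {n m : ℕ} (μw : Fin m → ℝ) (v : Fin m → Euc n) (A : Set (Euc n)) :
    discMeasR μw v A = ∑ i : Fin m, A.indicator (fun _ => ENNReal.ofReal (μw i)) (v i) := by
  rw [discMeasR, Measure.finset_sum_apply]
  refine Finset.sum_congr rfl fun i _ => ?_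
  rw [Measure.smul_apply, Measure.dirac_apply]
  by_cases h : v i ∈ A <;>
    simp [Set.indicator_of_mem, Set.indicator_of_notMem, h]

lemma discMeasR_eq_zero_iff {n m : ℕ} {μw : Fin m → ℝ} (h : ∀ i, 0 < μw i)
    (v : Fin m → Euc n) (A : Set (Euc n)) :
    discMeasR μw v A = 0 ↔ ∀ i, v i ∉ A := by
  rw [discMeasR_apply', Finset.sum_eq_zero_iff]
  constructor
  · intro H i hi
    have := H i (Finset.mem_univ i)
    rw [Set.indicator_of_mem hi] at this
    exact absurd this (by simp [ENNReal.ofReal_eq_zero, not_le, h i])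
  · intro H i _
    rw [Set.indicator_of_notMem (H i)]

lemma discMeasR_congr {n m : ℕ} (μw : Fin m → ℝ) (v : Fin m → Euc n) {A B : Set (Euc n)}
    (h : ∀ i, v i ∈ A ↔ v i ∈ B) : discMeasR μw v A = discMeasR μw v B := by
  rw [discMeasR_apply', discMeasR_apply']
  refine Finset.sum_congr rfl fun i _ => ?_
  by_cases hm : v i ∈ A
  · rw [Set.indicator_of_mem hm, Set.indicator_of_mem ((h i).mp hm)]
  · rw [Set.indicator_of_notMem hm, Set.indicator_of_notMem (fun hb => hm ((h i).mpr hb))]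

lemma radial_spec {n : ℕ} {K : Set (Euc n)} (hK : IsConvexBody0 K) {u : Euc n} (hu : ‖u‖ = 1) :
    0 < radialFn K u ∧ radialFn K u • u ∈ K ∧ ∀ t : ℝ, t • u ∈ K → t ≤ radialFn K u := by
  obtain ⟨δ, hδpos, hδ⟩ := Metric.mem_nhds_iff.mp (mem_interior_iff_mem_nhds.mp hK.2.2)
  obtain ⟨R, hR⟩ := hK.1.isBounded.exists_norm_le
  set S : Set ℝ := {t : ℝ | 0 < t ∧ t • u ∈ K} with hS
  have hmemS : (δ / 2) ∈ S := by
    refine ⟨by linarith, hδ ?_⟩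
    rw [Metric.mem_ball, dist_zero_right, norm_smul, hu, mul_one, Real.norm_eq_abs]
    rw [abs_of_pos (by linarith : (0:ℝ) < δ / 2)]; linarith
  have hbdd : BddAbove S := by
    refine ⟨R, fun t ht => ?_⟩
    have := hR _ ht.2
    rw [norm_smul, hu, mul_one, Real.norm_eq_abs, abs_of_pos ht.1] at this
    exact this
  have hpos : 0 < radialFn K u := lt_of_lt_of_le (by linarith) (le_csSup hbdd hmemS)
  have hub : ∀ t : ℝ, t • u ∈ K → t ≤ radialFn K u := by
    intro t ht
    rcases le_or_gt t 0 with h | h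
    · linarith
    · exact le_csSup hbdd ⟨h, ht⟩
  refine ⟨hpos, ?_, hub⟩
  have h1 : radialFn K u ∈ closure S := csSup_mem_closure ⟨_, hmemS⟩ hbdd
  have h2 : Continuous fun t : ℝ => t • u := continuous_id.smul continuous_const
  have h3 : (fun t : ℝ => t • u) (radialFn K u) ∈ closure K :=
    map_mem_closure (f := fun t : ℝ => t • u) h2 h1 (fun t ht => ht.2)
  simp only at h3
  rwa [hK.1.isClosed.closure_eq] at h3

lemma maximizer_is_radial {n : ℕ} {K : Set (Euc n)} (hK : IsConvexBody0 K) {y w : Euc n}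
    (hw : ‖w‖ = 1) (hy : y ∈ K) (hmax : ∀ z ∈ K, ⟪z, w⟫ ≤ ⟪y, w⟫) :
    ∃ u : Euc n, ‖u‖ = 1 ∧ radialFn K u • u = y ∧ w ∈ normalCone K y := by
  obtain ⟨δ, hδpos, hδ⟩ := Metric.mem_nhds_iff.mp (mem_interior_iff_mem_nhds.mp hK.2.2)
  have hzK : (δ / 2) • w ∈ K := by
    apply hδ
    rw [Metric.mem_ball, dist_zero_right, norm_smul, hw, mul_one, Real.norm_eq_abs,
      abs_of_pos (by linarith : (0:ℝ) < δ / 2)]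
    linarith
  have hinpos : 0 < ⟪y, w⟫ := by
    have h1 := hmax _ hzK
    rw [real_inner_smul_left, real_inner_self_eq_norm_sq, hw] at h1
    nlinarith
  have hy0 : y ≠ 0 := by
    intro h; rw [h, inner_zero_left] at hinpos; exact lt_irrefl _ hinpos
  have hny : 0 < ‖y‖ := norm_pos_iff.mpr hy0
  set u : Euc n := ‖y‖⁻¹ • y with hudef
  have hunorm : ‖u‖ = 1 := by
    rw [hudef, norm_smul, norm_inv, norm_norm, inv_mul_cancel₀ (ne_of_gt hny)]
  have hyu : ‖y‖ • u = y := by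
    rw [hudef, smul_smul, mul_inv_cancel₀ (ne_of_gt hny), one_smul]
  have hub : ∀ t : ℝ, t • u ∈ K → t ≤ ‖y‖ := by
    intro t ht
    have h1 := hmax _ ht
    rw [hudef, smul_smul, real_inner_smul_left] at h1
    have h2 : t * ‖y‖⁻¹ ≤ 1 := by
      by_contra h3
      push_neg at h3
      nlinarith
    calc t = t * ‖y‖⁻¹ * ‖y‖ := by field_simp
    _ ≤ 1 * ‖y‖ := by nlinarith
    _ = ‖y‖ := one_mul _
  have hmem : ‖y‖ ∈ {t : ℝ | 0 < t ∧ t • u ∈ K} := ⟨hny, by rw [hyu]; exact hy⟩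
  have hbdd : BddAbove {t : ℝ | 0 < t ∧ t • u ∈ K} := ⟨‖y‖, fun t ht => hub t ht.2⟩
  have hr : radialFn K u = ‖y‖ :=
    le_antisymm (csSup_le ⟨_, hmem⟩ fun t ht => hub t ht.2) (le_csSup hbdd hmem)
  refine ⟨u, hunorm, by rw [hr, hyu], ?_⟩
  refine ⟨mem_uSphere_iff.mpr hw, fun z hz => ?_⟩
  rw [inner_sub_left, sub_nonpos]
  exact hmax z hz

lemma convex_inner_le {n : ℕ} (w : Euc n) (c : ℝ) : Convex ℝ {y : Euc n | ⟪y, w⟫ ≤ c} :=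
  convex_halfSpace_le ⟨fun a b => inner_add_left a b w,
    fun r a => by rw [real_inner_smul_left, smul_eq_mul]⟩ c

lemma normalCone_hull {n m : ℕ} {x : Fin m → Euc n} {i0 : Fin m} {w : Euc n}
    (hw : w ∈ uSphere n) (h : ∀ i, ⟪x i - x i0, w⟫ ≤ 0) :
    w ∈ normalCone (convexHull ℝ (Set.range x)) (x i0) := by
  refine ⟨hw, fun y hy => ?_⟩
  have hsub : convexHull ℝ (Set.range x) ⊆ {y : Euc n | ⟪y, w⟫ ≤ ⟪x i0, w⟫} := by
    apply convexHull_min ?_ (convex_inner_le w _)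
    rintro _ ⟨i, rfl⟩
    have := h i
    rw [inner_sub_left] at this
    simp only [mem_setOf_eq]
    linarith
  have := hsub hy
  rw [inner_sub_left]
  simp only [mem_setOf_eq] at this
  linarith

lemma convex_finite_subsingleton {n : ℕ} {F : Set (Euc n)} (hc : Convex ℝ F) (hf : F.Finite) :
    F.Subsingleton := by
  intro a ha b hb
  by_contra hab
  have hseg : segment ℝ a b ⊆ F := hc.segment_subset ha hb
  have hinf : (segment ℝ a b).Infinite := by
    rw [segment_eq_image']
    refine (Set.infinite_image_iff ?_).mpr (Set.Icc_infinite (by norm_num : (0:ℝ) < 1))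
    intro s _ t _ hst
    have hd : b - a ≠ 0 := sub_ne_zero.mpr (Ne.symm hab)
    exact smul_left_injective ℝ hd (add_left_cancel hst)
  exact hinf (hf.subset hseg)

lemma zero_mem_interior_hull {n m : ℕ} (x : Fin m → Euc n) (hne : Nonempty (Fin m))
    (H : ∀ w : Euc n, ‖w‖ = 1 → ∃ i, 0 < ⟪x i, w⟫) :
    (0 : Euc n) ∈ interior (convexHull ℝ (Set.range x)) := by
  by_contra h0
  have hw : ∃ w : Euc n, w ≠ 0 ∧ ∀ i, ⟪x i, w⟫ ≤ 0 := by
    by_cases hi : (interior (convexHull ℝ (Set.range x))).Nonempty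
    · obtain ⟨f, hf⟩ := geometric_hahn_banach_open_point
        (Convex.interior (convex_convexHull ℝ _)) isOpen_interior h0
      have hf0 : ∀ a ∈ interior (convexHull ℝ (Set.range x)), f a < 0 := by
        intro a ha; have := hf a ha; simpa using this
      obtain ⟨a, haint⟩ := hi
      have hfa : f a < 0 := hf0 a haint
      have hP : ∀ y ∈ convexHull ℝ (Set.range x), f y ≤ 0 := by
        intro y hy
        by_contra hfy
        push_neg at hfy
        set t : ℝ := f y / (f y - f a) with ht
        have hden : 0 < f y - f a := by linarith
        have ht0 : 0 < t := div_pos hfy hden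
        have ht1 : 1 - t = -f a / (f y - f a) := by
          rw [ht]; field_simp; ring
        have ht1' : 0 ≤ 1 - t := by
          rw [ht1]; apply div_nonneg <;> linarith
        have hcombo : (1 - t) • y + t • a ∈ interior (convexHull ℝ (Set.range x)) :=
          (convex_convexHull ℝ _).combo_closure_interior_mem_interior
            (subset_closure hy) haint ht1' ht0 (by ring)
        have hlt := hf0 _ hcombo
        rw [map_add, f.map_smul, f.map_smul, smul_eq_mul, smul_eq_mul] at hlt
        have hval : (1 - t) * f y + t * f a = 0 := by
          rw [ht]; field_simp; ring
        linarith
      set w : Euc n := (InnerProductSpace.toDual ℝ (Euc n)).symm f with hwdef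
      have hwz : ∀ z : Euc n, ⟪w, z⟫ = f z := by
        intro z
        rw [hwdef, ← InnerProductSpace.toDual_apply_apply]
        simp
      refine ⟨w, ?_, fun i => ?_⟩
      · intro h
        rw [h] at hwz
        have := hwz a
        rw [inner_zero_left] at this
        linarith
      · rw [real_inner_comm, hwz]
        exact hP _ (subset_convexHull ℝ _ (mem_range_self i))
    · have hspan : affineSpan ℝ (Set.range x) ≠ ⊤ := by
        intro h
        exact hi (interior_convexHull_nonempty_iff_affineSpan_eq_top.mpr h)
      obtain ⟨i0⟩ := hne
      have hspne : (affineSpan ℝ (Set.range x) : Set (Euc n)).Nonempty :=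
        ⟨x i0, subset_affineSpan ℝ _ (mem_range_self i0)⟩
      have hdir : (affineSpan ℝ (Set.range x)).direction ≠ ⊤ := by
        intro h
        exact hspan ((AffineSubspace.direction_eq_top_iff_of_nonempty hspne).mp h)
      have horth : ((affineSpan ℝ (Set.range x)).direction)ᗮ ≠ ⊥ := by
        intro h
        exact hdir (Submodule.orthogonal_eq_bot_iff.mp h)
      obtain ⟨w, hwmem, hw0⟩ := Submodule.exists_mem_ne_zero_of_ne_bot horth
      have hconst : ∀ i, ⟪x i, w⟫ = ⟪x i0, w⟫ := by
        intro i
        have hd := AffineSubspace.vsub_mem_direction (s := affineSpan ℝ (Set.range x))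
          (subset_affineSpan ℝ _ (mem_range_self i))
          (subset_affineSpan ℝ _ (mem_range_self i0))
        rw [vsub_eq_sub] at hd
        have h5 := (Submodule.mem_orthogonal _ w).mp hwmem _ hd
        rw [inner_sub_left] at h5
        linarith
      rcases le_or_gt (⟪x i0, w⟫ : ℝ) 0 with hc | hc
      · exact ⟨w, hw0, fun i => by rw [hconst i]; exact hc⟩
      · refine ⟨-w, neg_ne_zero.mpr hw0, fun i => ?_⟩
        rw [inner_neg_right, hconst i]
        linarith
  obtain ⟨w, hw0, hwle⟩ := hw
  have hnw : 0 < ‖w‖ := norm_pos_iff.mpr hw0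
  obtain ⟨i, hi⟩ := H (‖w‖⁻¹ • w)
    (by rw [norm_smul, norm_inv, norm_norm, inv_mul_cancel₀ (ne_of_gt hnw)])
  rw [real_inner_smul_right] at hi
  have h6 := hwle i
  nlinarith [inv_pos.mpr hnw]


/-- If a convex body `K` solves the Discrete Gauss Image problem, so does the
polytope with vertices `r_K(v_i)`, and each `u_j` lies in the relative interior of a normal
cone at a vertex. -/
theorem stmt8 (n m k : ℕ) (hn : 1 ≤ n)
    (v : Fin m → Euc n) (u : Fin k → Euc n)
    (hv : ∀ i, v i ∈ uSphere n) (hu : ∀ j, u j ∈ uSphere n)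
    (hvinj : Function.Injective v) (huinj : Function.Injective u)
    (μw : Fin m → ℝ) (lw : Fin k → ℝ) (hμw : ∀ i, 0 < μw i) (hlw : ∀ j, 0 < lw j)
    (hNH : NotHemisphere v)
    (K : Set (Euc n)) (hK : IsConvexBody0 K)
    (hrel : GaussRel K (discMeasR lw u) (discMeasR μw v)) :
    (0 : Euc n) ∈ interior (convexHull ℝ (Set.range fun i => radialFn K (v i) • v i)) ∧
    GaussRel (convexHull ℝ (Set.range fun i => radialFn K (v i) • v i))
      (discMeasR lw u) (discMeasR μw v) ∧
    ∃ f : Fin k → Fin m, ∀ j : Fin k,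
      u j ∈ sphInterior (normalCone
        (convexHull ℝ (Set.range fun i => radialFn K (v i) • v i))
        (radialFn K (v (f j)) • v (f j))) := by
  classical
  have hunorm : ∀ j, ‖u j‖ = 1 := fun j => mem_uSphere_iff.mp (hu j)
  have hvnorm : ∀ i, ‖v i‖ = 1 := fun i => mem_uSphere_iff.mp (hv i)
  set x : Fin m → Euc n := fun i => radialFn K (v i) • v i with hxdef
  set P : Set (Euc n) := convexHull ℝ (Set.range x) with hPdef
  have hKspec := fun i => radial_spec hK (hvnorm i)
  have hrpos : ∀ i, 0 < radialFn K (v i) := fun i => (hKspec i).1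
  have hxK : ∀ i, x i ∈ K := fun i => (hKspec i).2.1
  have hxval : ∀ i, x i = radialFn K (v i) • v i := fun i => rfl
  have hxinj : Function.Injective x := by
    intro i i' h
    have hnorm : radialFn K (v i) = radialFn K (v i') := by
      have h2 := congrArg norm h
      rw [hxval, hxval] at h2
      simp only [norm_smul, hvnorm, mul_one, Real.norm_eq_abs] at h2
      rwa [abs_of_pos (hrpos i), abs_of_pos (hrpos i')] at h2
    apply hvinj
    have h3 : radialFn K (v i) • v i = radialFn K (v i) • v i' := by
      rw [← hxval i, h, hxval i', ← hnorm]
    exact smul_right_injective (Euc n) (ne_of_gt (hrpos i)) h3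
  have hPK : P ⊆ K := convexHull_min (by rintro _ ⟨i, rfl⟩; exact hxK i) hK.2.1
  have hxP : ∀ i, x i ∈ P := fun i => subset_convexHull ℝ _ (mem_range_self i)
  have hNH' : ∀ w : Euc n, ‖w‖ = 1 → ∃ i, 0 < (⟪w, v i⟫ : ℝ) := by
    intro w hw
    by_contra h
    push_neg at h
    exact hNH ⟨w, mem_uSphere_iff.mpr hw, fun i => h i⟩
  have hmne : Nonempty (Fin m) := by
    by_contra h
    obtain ⟨i, _⟩ := hNH' (EuclideanSpace.single (⟨0, hn⟩ : Fin n) 1)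
      (by simp [EuclideanSpace.norm_single])
    exact h ⟨i⟩
  have h0P : (0 : Euc n) ∈ interior P := by
    apply zero_mem_interior_hull x hmne
    intro w hw
    obtain ⟨i, hi⟩ := hNH' w hw
    refine ⟨i, ?_⟩
    rw [hxval i, real_inner_smul_left, real_inner_comm]
    exact mul_pos (hrpos i) hi
  have hPbody : IsConvexBody0 P := ⟨(Set.finite_range x).isCompact_convexHull (𝕜 := ℝ),
    convex_convexHull ℝ _, h0P⟩
  have hrP : ∀ i, radialFn P (v i) = radialFn K (v i) := by
    intro i
    apply le_antisymm
    · refine csSup_le ⟨radialFn K (v i), ⟨hrpos i, hxP i⟩⟩ ?_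
      intro t ht
      exact (hKspec i).2.2 t (hPK ht.2)
    · apply le_csSup ⟨radialFn K (v i), fun t ht => (hKspec i).2.2 t (hPK ht.2)⟩
      exact ⟨hrpos i, hxP i⟩
  have hω₀sub : uSphere n \ Set.range v ⊆ uSphere n := diff_subset
  have hSclosed : IsClosed (uSphere n) := Metric.isClosed_sphere
  have hω₀meas : MeasurableSet (uSphere n \ Set.range v) :=
    (hSclosed.measurableSet).diff (Set.finite_range v).measurableSet
  have hAsub : ∀ j, ∀ w : Euc n, w ∈ uSphere n →
      u j ∈ normalCone K (radialFn K w • w) → ∃ i, w = v i := by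
    intro j w hw hmem
    by_contra h
    push_neg at h
    have hwω : w ∈ uSphere n \ Set.range v := ⟨hw, by rintro ⟨i, rfl⟩; exact h i rfl⟩
    have h0 : discMeasR lw u (gaussImage K (uSphere n \ Set.range v)) = 0 := by
      rw [hrel _ hω₀sub hω₀meas]
      exact (discMeasR_eq_zero_iff hμw v _).mpr (fun i hi => hi.2 (mem_range_self i))
    exact (discMeasR_eq_zero_iff hlw u _).mp h0 j (mem_biUnion hwω hmem)
  have hface : ∀ j : Fin k, ∃ i : Fin m, ∀ y ∈ K, y ≠ x i → (⟪y - x i, u j⟫ : ℝ) < 0 := by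
    intro j
    have hcont : Continuous fun z : Euc n => (⟪z, u j⟫ : ℝ) :=
      continuous_id.inner continuous_const
    obtain ⟨y0, hy0K, hy0max⟩ := hK.1.exists_isMaxOn ⟨0, interior_subset hK.2.2⟩
      hcont.continuousOn
    have hy0max' : ∀ z ∈ K, (⟪z, u j⟫ : ℝ) ≤ ⟪y0, u j⟫ := fun z hz => hy0max hz
    have hkey : ∀ y ∈ K, (⟪y, u j⟫ : ℝ) = ⟪y0, u j⟫ → ∃ i, y = x i := by
      intro y hy hval
      have hmax' : ∀ z ∈ K, (⟪z, u j⟫ : ℝ) ≤ ⟪y, u j⟫ := fun z hz => by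
        rw [hval]; exact hy0max' z hz
      obtain ⟨w, hwnorm, hru, hNC⟩ := maximizer_is_radial hK (hunorm j) hy hmax'
      have hNC' : u j ∈ normalCone K (radialFn K w • w) := by rw [hru]; exact hNC
      obtain ⟨i, rfl⟩ := hAsub j w (mem_uSphere_iff.mpr hwnorm) hNC'
      exact ⟨i, hru.symm⟩
    have hFconv : Convex ℝ {y ∈ K | (⟪y, u j⟫ : ℝ) = ⟪y0, u j⟫} := by
      intro y1 h1 y2 h2 a b ha hb hab
      refine ⟨hK.2.1 h1.1 h2.1 ha hb hab, ?_⟩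
      rw [inner_add_left, real_inner_smul_left, real_inner_smul_left, h1.2, h2.2,
        ← add_mul, hab, one_mul]
    have hFfin : Set.Finite {y ∈ K | (⟪y, u j⟫ : ℝ) = ⟪y0, u j⟫} :=
      (Set.finite_range x).subset (fun y hy => by
        obtain ⟨i, hi⟩ := hkey y hy.1 hy.2
        exact ⟨i, hi.symm⟩)
    have hFsub := convex_finite_subsingleton hFconv hFfin
    obtain ⟨i0, hi0⟩ := hkey y0 hy0K rfl
    refine ⟨i0, fun y hyK hyne => ?_⟩
    have h1 : (⟪y, u j⟫ : ℝ) ≤ ⟪y0, u j⟫ := hy0max' y hyK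
    have h2 : (⟪y, u j⟫ : ℝ) ≠ ⟪y0, u j⟫ := by
      intro he
      apply hyne
      have h3 : y = y0 := hFsub ⟨hyK, he⟩ ⟨hy0K, rfl⟩
      rw [h3, hi0]
    rw [inner_sub_left, ← hi0]
    have := lt_of_le_of_ne h1 h2
    linarith
  choose f hf using hface
  have hNCK : ∀ j, u j ∈ normalCone K (x (f j)) := by
    intro j
    refine ⟨hu j, fun y hy => ?_⟩
    rcases eq_or_ne y (x (f j)) with h | h
    · rw [h, sub_self, inner_zero_left]
    · exact (hf j y hy h).le
  have hGK : ∀ j, ∀ w : Euc n, w ∈ uSphere n →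
      (u j ∈ normalCone K (radialFn K w • w) ↔ w = v (f j)) := by
    intro j w hw
    constructor
    · intro h
      have hwn : ‖w‖ = 1 := mem_uSphere_iff.mp hw
      have hspec := radial_spec hK hwn
      have hpx : radialFn K w • w = x (f j) := by
        by_contra hne
        have h1 := hf j _ hspec.2.1 hne
        have h2 := h.2 (x (f j)) (hxK (f j))
        rw [inner_sub_left] at h1 h2
        linarith
      have hnormeq : radialFn K w = radialFn K (v (f j)) := by
        have h2 := congrArg norm hpx
        rw [hxval] at h2
        simp only [norm_smul, hwn, hvnorm, mul_one, Real.norm_eq_abs] at h2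
        rwa [abs_of_pos hspec.1, abs_of_pos (hrpos (f j))] at h2
      apply smul_right_injective (Euc n) (ne_of_gt hspec.1)
      show radialFn K w • w = radialFn K w • v (f j)
      rw [hpx, hxval, hnormeq]
    · rintro rfl
      exact hNCK j
  have hNCP : ∀ j, u j ∈ normalCone P (x (f j)) := by
    intro j
    apply normalCone_hull (hu j)
    intro i
    rcases eq_or_ne i (f j) with h | h
    · rw [h, sub_self, inner_zero_left]
    · exact (hf j (x i) (hxK i) (fun he => h (hxinj he))).le
  have hGP : ∀ j, ∀ w : Euc n, w ∈ uSphere n →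
      (u j ∈ normalCone P (radialFn P w • w) ↔ w = v (f j)) := by
    intro j w hw
    constructor
    · intro h
      have hwn : ‖w‖ = 1 := mem_uSphere_iff.mp hw
      have hspec := radial_spec hPbody hwn
      have hpx : radialFn P w • w = x (f j) := by
        by_contra hne
        have h1 := hf j _ (hPK hspec.2.1) hne
        have h2 := h.2 (x (f j)) (hxP (f j))
        rw [inner_sub_left] at h1 h2
        linarith
      have hnormeq : radialFn P w = radialFn K (v (f j)) := by
        have h2 := congrArg norm hpx
        rw [hxval] at h2
        simp only [norm_smul, hwn, hvnorm, mul_one, Real.norm_eq_abs] at h2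
        rwa [abs_of_pos hspec.1, abs_of_pos (hrpos (f j))] at h2
      apply smul_right_injective (Euc n) (ne_of_gt hspec.1)
      show radialFn P w • w = radialFn P w • v (f j)
      rw [hpx, hxval, hnormeq]
    · rintro rfl
      have h4 : radialFn P (v (f j)) • v (f j) = x (f j) := by
        rw [hrP (f j), hxval]
      rw [h4]
      exact hNCP j
  have hGR : GaussRel P (discMeasR lw u) (discMeasR μw v) := by
    intro ω hω hωm
    have key : ∀ j, u j ∈ gaussImage P ω ↔ u j ∈ gaussImage K ω := by
      intro j
      constructor
      · intro hmem
        rw [gaussImage, Set.mem_iUnion₂] at hmem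
        obtain ⟨w, hwω, hwin⟩ := hmem
        have hwv := (hGP j w (hω hwω)).mp hwin
        subst hwv
        exact mem_biUnion hwω ((hGK j (v (f j)) (hv _)).mpr rfl)
      · intro hmem
        rw [gaussImage, Set.mem_iUnion₂] at hmem
        obtain ⟨w, hwω, hwin⟩ := hmem
        have hwv := (hGK j w (hω hwω)).mp hwin
        subst hwv
        exact mem_biUnion hwω ((hGP j (v (f j)) (hv _)).mpr rfl)
    calc discMeasR lw u (gaussImage P ω) = discMeasR lw u (gaussImage K ω) :=
          discMeasR_congr lw u key
      _ = discMeasR μw v ω := hrel ω hω hωm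
  refine ⟨h0P, hGR, ⟨f, fun j => ?_⟩⟩
  have hgoal : radialFn K (v (f j)) • v (f j) = x (f j) := rfl
  rw [hgoal]
  have hkey : ∀ i, i ≠ f j → 0 < (⟪x (f j) - x i, u j⟫ : ℝ) := by
    intro i hi
    have h5 := hf j (x i) (hxK i) (fun he => hi (hxinj he))
    rw [inner_sub_left] at h5
    rw [inner_sub_left]
    linarith
  have hxne : ∀ i, i ≠ f j → x i - x (f j) ≠ 0 :=
    fun i hi => sub_ne_zero.mpr (fun he => hi (hxinj he))
  set g : Fin m → ℝ := fun i =>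
    if i = f j then 1 else (⟪x (f j) - x i, u j⟫ : ℝ) / ‖x i - x (f j)‖ with hg
  have hgpos : ∀ i, 0 < g i := by
    intro i
    rcases eq_or_ne i (f j) with h | h
    · simp [hg, h]
    · rw [hg]
      simp only [if_neg h]
      exact div_pos (hkey i h) (norm_pos_iff.mpr (hxne i h))
  have hne' : (Finset.univ : Finset (Fin m)).Nonempty := ⟨f j, Finset.mem_univ _⟩
  set ε : ℝ := Finset.univ.inf' hne' g with hεdef
  have hεpos : 0 < ε := by
    rw [hεdef]
    exact (Finset.lt_inf'_iff hne').mpr (fun i _ => hgpos i)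
  refine ⟨hu j, ε, hεpos, fun y hyS hdist => ?_⟩
  apply normalCone_hull hyS
  intro i
  rcases eq_or_ne i (f j) with h | h
  · rw [h, sub_self, inner_zero_left]
  · have hc := hkey i h
    have hεle : ε ≤ g i := Finset.inf'_le g (Finset.mem_univ i)
    rw [hg] at hεle
    simp only [if_neg h] at hεle
    have hnrm : 0 < ‖x i - x (f j)‖ := norm_pos_iff.mpr (hxne i h)
    have hdist' : ‖y - u j‖ < ε := by rw [← dist_eq_norm]; exact hdist
    have hCS : (⟪x i - x (f j), y - u j⟫ : ℝ) ≤ ‖x i - x (f j)‖ * ‖y - u j‖ :=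
      real_inner_le_norm _ _
    have hdecomp : (⟪x i - x (f j), y⟫ : ℝ)
        = ⟪x i - x (f j), u j⟫ + ⟪x i - x (f j), y - u j⟫ := by
      rw [← inner_add_right, add_sub_cancel]
    have h1 : (⟪x i - x (f j), u j⟫ : ℝ) = -(⟪x (f j) - x i, u j⟫ : ℝ) := by
      rw [← inner_neg_left, neg_sub]
    have hmul : ‖x i - x (f j)‖ * ε ≤ (⟪x (f j) - x i, u j⟫ : ℝ) := by
      rw [mul_comm]
      exact (le_div_iff₀ hnrm).mp hεle
    have hprod : ‖x i - x (f j)‖ * ‖y - u j‖ < ‖x i - x (f j)‖ * ε :=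
      mul_lt_mul_of_pos_left hdist' hnrm
    linarith
end
end
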